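/- arXiv:2112.15515 — 2 statements merged into one kernel-verified Lean document; each statement's English description precedes it below -/
import Mathlib

section
/- Let G be a directed graph (quiver) on a vertex set V that is acyclic, and let S ⊆ V be a convex subset of vertices. Then the contraction G/S, obtained by shrinking S to a single vertex, is again acyclic. -/
/-!
STATEMENT 0: If `G` is an acyclic quiver on `V` and `S ⊆ V` is convex, then the
contraction `G/S` (shrinking `S` to a single vertex `*`) is acyclic.
-/

open Quiver

/-- The list of vertices visited by a path (including both endpoints). -/
def pathVerts {V : Type} [Quiver.{1} V] : ∀ {a b : V}, Path a b → List V
  | a, _, .nil => [a]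
  | _, b, .cons p _ => pathVerts p ++ [b]

/-- A quiver is acyclic if there is no nonempty path from a vertex to itself. -/
def QuiverAcyclic (V : Type) [Quiver.{1} V] : Prop :=
  ∀ (a : V) (p : Path a a), p.length = 0

/-- A set of vertices is convex if every path whose endpoints lie in `S`
has all of its vertices in `S`. -/
def QuiverConvex {V : Type} [Quiver.{1} V] (S : Set V) : Prop :=
  ∀ ⦃a b : V⦄, a ∈ S → b ∈ S → ∀ p : Path a b, ∀ v ∈ pathVerts p, v ∈ S

/-- Vertex set of the contraction `G/S`: the vertices outside `S` together with
one extra vertex `*` (represented by `none`). -/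
def ContractV {V : Type} (S : Set V) : Type := Option {v : V // v ∉ S}

open Classical in
/-- The map sending a vertex of `G` to the corresponding vertex of `G/S`. -/
noncomputable def contractVert {V : Type} (S : Set V) (v : V) : ContractV S :=
  if h : v ∈ S then none else some ⟨v, h⟩

/-- Edges of the contraction `G/S`: all edges of `G` except those with both
endpoints in `S`, with endpoints replaced using `contractVert`. -/
noncomputable instance contractQuiver {V : Type} [Quiver.{1} V] (S : Set V) :
    Quiver.{1} (ContractV S) where
  Hom x y :=
    { p : Σ a b : V, a ⟶ b //
        contractVert S p.1 = x ∧ contractVert S p.2.1 = y ∧ ¬(p.1 ∈ S ∧ p.2.1 ∈ S) }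

/-!
A cycle of `G/S` that never visits `*` lifts to a cycle of `G`. A cycle through `*` would contain
a nonempty path from `*` to `*`; but every vertex reached from `*` is the image of a vertex outside
`S` that is reachable in `G` from `S`, and by convexity no edge leads from such a vertex back
into `S`, while edges from `S` into `S` were deleted.
-/

section Contraction

variable {V : Type} {S : Set V}

lemma contractVert_of_notMem {v : V} (hv : v ∉ S) : contractVert S v = some ⟨v, hv⟩ :=
  dif_neg hv

lemma contractVert_eq_none_iff {v : V} : contractVert S v = none ↔ v ∈ S := by
  by_cases hv : v ∈ S
  · exact iff_of_true (dif_pos hv) hv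
  · rw [contractVert_of_notMem hv]
    exact iff_of_false (Option.some_ne_none _) hv

lemma eq_of_contractVert_eq {a b : V} (h : contractVert S a = contractVert S b) (hb : b ∉ S) :
    a = b := by
  by_cases ha : a ∈ S
  · rw [contractVert_eq_none_iff.2 ha, contractVert_of_notMem hb] at h
    cases h
  · rw [contractVert_of_notMem ha, contractVert_of_notMem hb] at h
    exact congrArg Subtype.val (Option.some_injective _ h)

variable [Quiver.{1} V]

lemma last_mem_pathVerts : ∀ {a b : V} (p : Path a b), b ∈ pathVerts p
  | _, _, .nil => by simp [pathVerts]
  | _, _, .cons _ _ => by simp [pathVerts]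

lemma QuiverConvex.notMem_of_cons (hS : QuiverConvex S) {s a b : V} (hs : s ∈ S)
    (p : Path s a) (ha : a ∉ S) (e : a ⟶ b) : b ∉ S := fun hb =>
  ha (hS hs hb (p.cons e) a (by simp [pathVerts, last_mem_pathVerts p]))

lemma path_contract_visits_star_or_lifts {a : V} {x y : ContractV S}
    (hx : contractVert S a = x) (q : Path x y) :
    (Nonempty (Path x none) ∧ Nonempty (Path (V := ContractV S) none y)) ∨
      ∃ b, contractVert S b = y ∧ ∃ p : Path a b, p.length = q.length := by
  induction q with
  | nil => exact Or.inr ⟨a, hx, .nil, rfl⟩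
  | cons q' e ih =>
    obtain ⟨⟨a', b', f⟩, hea', heb', hf⟩ := e
    rcases ih with ⟨hx_star, ⟨p₂⟩⟩ | ⟨b, hb, p, hp⟩
    · exact Or.inl ⟨hx_star, ⟨p₂.cons ⟨⟨a', b', f⟩, hea', heb', hf⟩⟩⟩
    by_cases hbS : b ∈ S
    · obtain rfl : _ = none := hb.symm.trans (contractVert_eq_none_iff.2 hbS)
      exact Or.inl ⟨⟨q'⟩, ⟨Hom.toPath ⟨⟨a', b', f⟩, hea', heb', hf⟩⟩⟩
    · obtain rfl : a' = b := eq_of_contractVert_eq (hea'.trans hb.symm) hbS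
      exact Or.inr ⟨b', heb', p.cons f, by simp [hp]⟩

lemma path_from_star_reaches_from_set (hS : QuiverConvex S) {y : ContractV S}
    (q : Path (V := ContractV S) none y) :
    q.length = 0 ∨ ∃ s ∈ S, ∃ v ∉ S, contractVert S v = y ∧ Nonempty (Path s v) := by
  induction q with
  | nil => exact Or.inl rfl
  | cons q' e ih =>
    obtain ⟨⟨a, b, f⟩, hea, heb, hab⟩ := e
    refine Or.inr ?_
    rcases ih with h0 | ⟨s, hs, v, hv, hvy, ⟨p⟩⟩
    · have haS : a ∈ S :=
        contractVert_eq_none_iff.1 (hea.trans (Path.eq_of_length_zero q' h0).symm)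
      exact ⟨a, haS, b, fun hbS => hab ⟨haS, hbS⟩, heb, ⟨f.toPath⟩⟩
    · obtain rfl : a = v := eq_of_contractVert_eq (hea.trans hvy.symm) hv
      exact ⟨s, hs, b, hS.notMem_of_cons hs p hv f, heb, ⟨p.cons f⟩⟩

lemma length_eq_zero_of_path_star_star (hS : QuiverConvex S)
    (q : Path (V := ContractV S) none none) : q.length = 0 := by
  rcases path_from_star_reaches_from_set hS q with h0 | ⟨-, -, v, hv, hv_star, -⟩
  · exact h0
  · exact absurd (contractVert_eq_none_iff.1 hv_star) hv

end Contraction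

theorem contraction_of_convex_acyclic {V : Type} [Quiver.{1} V]
    (hG : QuiverAcyclic V) (S : Set V) (hS : QuiverConvex S) :
    QuiverAcyclic (ContractV S) := by
  rintro (_ | v) q
  · exact length_eq_zero_of_path_star_star hS q
  rcases path_contract_visits_star_or_lifts (x := some v) (contractVert_of_notMem v.2) q with
    ⟨⟨p₁⟩, ⟨p₂⟩⟩ | ⟨b, hb, p, hp⟩
  · have hp₁ : p₁.length ≠ 0 := fun h =>
      nomatch Path.eq_of_length_zero p₁ h
    have h_star := length_eq_zero_of_path_star_star hS (p₂.comp p₁)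
    rw [Path.length_comp p₂ p₁] at h_star
    omega
  · obtain rfl : b = v.1 := eq_of_contractVert_eq (hb.trans (contractVert_of_notMem v.2).symm) v.2
    exact hp ▸ hG _ p
end

section
/- Let ψ and φ be finite acyclic directed graphs and let f : F(ψ) → F(φ) be any functor between their path categories. Then f can be decomposed as a finite composite of elementary morphisms, f = fₙ ∘ … ∘ f₁; more precisely, there exist finite acyclic directed graphs ψ′, ψ″, ψ‴ and functors such that f factors as F(ψ) → F(ψ′) → F(ψ″) → F(ψ‴) → F(φ), where the first arrow is a composite of edge subdivisions, the second a composite of coarse-grainings of vertices, the third a composite of coarse-grainings of edges, and the last a composite of isomorphisms, vertex additions, edge additions, and edge subdivisions. -/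
open CategoryTheory

/-- A directed graph `ψ = (V, E, s, t)`. -/
structure DiGraph where
  V : Type
  E : Type
  s : E → V
  t : E → V

/-- The quiver structure on the vertices of a directed graph: an arrow `a ⟶ b`
is an edge with source `a` and target `b`. -/
instance DiGraph.quiver (G : DiGraph) : Quiver.{0} G.V :=
  ⟨fun a b => { e : G.E // G.s e = a ∧ G.t e = b }⟩

/-- A directed graph is acyclic if it has no nonempty path from a vertex to
itself. -/
def DiGraph.Acyclic (G : DiGraph) : Prop :=
  ∀ (a : G.V) (p : Quiver.Path a a), p.length = 0

/-- A causal network: a finite acyclic directed graph. -/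
def IsCausalNet (G : DiGraph) : Prop :=
  G.Acyclic ∧ Finite G.V ∧ Finite G.E

/-- The path category (free category) `F(ψ)` of a directed graph. -/
abbrev DiGraph.PathCat (G : DiGraph) := Paths G.V

/-- A map of directed graphs sending vertices to vertices and edges to edges
compatibly with sources and targets. -/
structure GraphMap (G H : DiGraph) where
  vMap : G.V → H.V
  eMap : G.E → H.E
  hs : ∀ e, H.s (eMap e) = vMap (G.s e)
  ht : ∀ e, H.t (eMap e) = vMap (G.t e)

/-- The prefunctor on quivers induced by a map of directed graphs. -/
def GraphMap.toPrefunctor {G H : DiGraph} (M : GraphMap G H) :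
    G.V ⥤q H.PathCat where
  obj v := (Paths.of H.V).obj (M.vMap v)
  map {a b} e :=
    (Paths.of H.V).map ⟨M.eMap e.1,
      by rw [M.hs]; exact congrArg M.vMap e.2.1,
      by rw [M.ht]; exact congrArg M.vMap e.2.2⟩

/-- The functor between path categories induced by a map of directed graphs. -/
def GraphMap.functor {G H : DiGraph} (M : GraphMap G H) :
    G.PathCat ⥤ H.PathCat :=
  Paths.lift M.toPrefunctor

/-- `F` is induced by an isomorphism of directed graphs. -/
def IsIsoMor (G H : DiGraph) (F : G.PathCat ⥤ H.PathCat) : Prop :=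
  ∃ M : GraphMap G H,
    Function.Bijective M.vMap ∧ Function.Bijective M.eMap ∧ F = M.functor

/-- `F` is induced by adding a single (isolated) vertex to `G`. -/
def IsAddVertex (G H : DiGraph) (F : G.PathCat ⥤ H.PathCat) : Prop :=
  ∃ M : GraphMap G H,
    Function.Injective M.vMap ∧ Function.Bijective M.eMap ∧
    (∃ v₀ : H.V, v₀ ∉ Set.range M.vMap ∧
      ∀ w : H.V, w = v₀ ∨ w ∈ Set.range M.vMap) ∧
    F = M.functor

/-- `F` is induced by adding a single edge between two vertices of `G`. -/
def IsAddEdge (G H : DiGraph) (F : G.PathCat ⥤ H.PathCat) : Prop :=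
  ∃ M : GraphMap G H,
    Function.Bijective M.vMap ∧ Function.Injective M.eMap ∧
    (∃ e₀ : H.E, e₀ ∉ Set.range M.eMap ∧
      ∀ e : H.E, e = e₀ ∨ e ∈ Set.range M.eMap) ∧
    F = M.functor

open Classical in
/-- The prefunctor induced by subdividing the edge `e₀` of `G`: the data are
the map on the remaining vertices and edges, the new vertex `x` and the
two new edges `e₁ : s e₀ → x` and `e₂ : x → t e₀`; the edge `e₀` is sent to the
length-two path through `x`. -/
noncomputable def subdivPrefunctor {G H : DiGraph} (e₀ : G.E)
    (vMap : G.V → H.V) (x : H.V) (eMap : { e : G.E // e ≠ e₀ } → H.E)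
    (e₁ e₂ : H.E)
    (hs : ∀ e, H.s (eMap e) = vMap (G.s e.1))
    (ht : ∀ e, H.t (eMap e) = vMap (G.t e.1))
    (hs1 : H.s e₁ = vMap (G.s e₀)) (ht1 : H.t e₁ = x)
    (hs2 : H.s e₂ = x) (ht2 : H.t e₂ = vMap (G.t e₀)) :
    G.V ⥤q H.PathCat where
  obj v := (Paths.of H.V).obj (vMap v)
  map {a b} e :=
    if h : e.1 = e₀ then
      ((Paths.of H.V).map ⟨e₁, by rw [hs1, ← h]; exact congrArg vMap e.2.1, ht1⟩ :
          (Paths.of H.V).obj (vMap a) ⟶ (Paths.of H.V).obj x) ≫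
        (Paths.of H.V).map ⟨e₂, hs2, by rw [ht2, ← h]; exact congrArg vMap e.2.2⟩
    else
      (Paths.of H.V).map ⟨eMap ⟨e.1, h⟩,
        by rw [hs]; exact congrArg vMap e.2.1,
        by rw [ht]; exact congrArg vMap e.2.2⟩

/-- `F` is induced by subdividing an edge of `G` by a new vertex. -/
def IsSubdivision (G H : DiGraph) (F : G.PathCat ⥤ H.PathCat) : Prop :=
  ∃ (e₀ : G.E) (vMap : G.V → H.V) (x : H.V)
    (eMap : { e : G.E // e ≠ e₀ } → H.E) (e₁ e₂ : H.E)
    (hs : ∀ e, H.s (eMap e) = vMap (G.s e.1))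
    (ht : ∀ e, H.t (eMap e) = vMap (G.t e.1))
    (hs1 : H.s e₁ = vMap (G.s e₀)) (ht1 : H.t e₁ = x)
    (hs2 : H.s e₂ = x) (ht2 : H.t e₂ = vMap (G.t e₀)),
    Function.Injective vMap ∧ x ∉ Set.range vMap ∧
    (∀ w : H.V, w = x ∨ w ∈ Set.range vMap) ∧
    Function.Injective eMap ∧ e₁ ≠ e₂ ∧
    e₁ ∉ Set.range eMap ∧ e₂ ∉ Set.range eMap ∧
    (∀ e : H.E, e = e₁ ∨ e = e₂ ∨ e ∈ Set.range eMap) ∧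
    F = Paths.lift (subdivPrefunctor e₀ vMap x eMap e₁ e₂ hs ht hs1 ht1 hs2 ht2)

open Classical in
/-- The prefunctor induced by merging a set `Sm` of parallel edges of `G`
(with common source `a` and common target `b`) into the single edge `em`. -/
noncomputable def edgeCoarsePrefunctor {G H : DiGraph} (Sm : Set G.E)
    (vMap : G.V → H.V) (eMap : { e : G.E // e ∉ Sm } → H.E) (em : H.E)
    (a b : G.V) (hcom : ∀ e ∈ Sm, G.s e = a ∧ G.t e = b)
    (hs : ∀ e, H.s (eMap e) = vMap (G.s e.1))
    (ht : ∀ e, H.t (eMap e) = vMap (G.t e.1))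
    (hsm : H.s em = vMap a) (htm : H.t em = vMap b) :
    G.V ⥤q H.PathCat where
  obj v := (Paths.of H.V).obj (vMap v)
  map {u w} e :=
    if h : e.1 ∈ Sm then
      (Paths.of H.V).map ⟨em,
        by rw [hsm, ← (hcom e.1 h).1]; exact congrArg vMap e.2.1,
        by rw [htm, ← (hcom e.1 h).2]; exact congrArg vMap e.2.2⟩
    else
      (Paths.of H.V).map ⟨eMap ⟨e.1, h⟩,
        by rw [hs]; exact congrArg vMap e.2.1,
        by rw [ht]; exact congrArg vMap e.2.2⟩

/-- `F` is induced by the coarse-graining of a (nonempty) set of edges with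
common source and target into a single edge. -/
def IsEdgeCoarse (G H : DiGraph) (F : G.PathCat ⥤ H.PathCat) : Prop :=
  ∃ (Sm : Set G.E) (vMap : G.V → H.V) (eMap : { e : G.E // e ∉ Sm } → H.E)
    (em : H.E) (a b : G.V) (hcom : ∀ e ∈ Sm, G.s e = a ∧ G.t e = b)
    (hs : ∀ e, H.s (eMap e) = vMap (G.s e.1))
    (ht : ∀ e, H.t (eMap e) = vMap (G.t e.1))
    (hsm : H.s em = vMap a) (htm : H.t em = vMap b),
    Sm.Nonempty ∧ Function.Bijective vMap ∧ Function.Injective eMap ∧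
    em ∉ Set.range eMap ∧ (∀ e : H.E, e = em ∨ e ∈ Set.range eMap) ∧
    F = Paths.lift (edgeCoarsePrefunctor Sm vMap eMap em a b hcom hs ht hsm htm)

open Classical in
/-- The collapse map on vertices shrinking the subset `S` to the point `x`. -/
noncomputable def collapseV {G H : DiGraph} (S : Set G.V) (x : H.V)
    (vMap : { v : G.V // v ∉ S } → H.V) (v : G.V) : H.V :=
  if h : v ∈ S then x else vMap ⟨v, h⟩

open Classical in
/-- The prefunctor induced by shrinking the induced subgraph on the vertex set
`S` of `G` to the single point `x`: edges with both endpoints in `S` are sent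
to the identity path at `x`. -/
noncomputable def vertexCoarsePrefunctor {G H : DiGraph} (S : Set G.V)
    (x : H.V) (vMap : { v : G.V // v ∉ S } → H.V)
    (eMap : { e : G.E // ¬(G.s e ∈ S ∧ G.t e ∈ S) } → H.E)
    (hs : ∀ e, H.s (eMap e) = collapseV S x vMap (G.s e.1))
    (ht : ∀ e, H.t (eMap e) = collapseV S x vMap (G.t e.1)) :
    G.V ⥤q H.PathCat where
  obj v := (Paths.of H.V).obj (collapseV S x vMap v)
  map {u w} e :=
    if h : G.s e.1 ∈ S ∧ G.t e.1 ∈ S then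
      eqToHom (by
        have hu : u ∈ S := e.2.1 ▸ h.1
        have hw : w ∈ S := e.2.2 ▸ h.2
        show (Paths.of H.V).obj (collapseV S x vMap u) = (Paths.of H.V).obj (collapseV S x vMap w)
        unfold collapseV
        rw [dif_pos hu, dif_pos hw])
    else
      (Paths.of H.V).map ⟨eMap ⟨e.1, h⟩,
        by rw [hs]; exact congrArg (collapseV S x vMap) e.2.1,
        by rw [ht]; exact congrArg (collapseV S x vMap) e.2.2⟩

/-- `F` is induced by the coarse-graining of a set of vertices: the induced
subgraph on `S` is shrunk to a single point. -/
def IsVertexCoarse (G H : DiGraph) (F : G.PathCat ⥤ H.PathCat) : Prop :=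
  ∃ (S : Set G.V) (x : H.V) (vMap : { v : G.V // v ∉ S } → H.V)
    (eMap : { e : G.E // ¬(G.s e ∈ S ∧ G.t e ∈ S) } → H.E)
    (hs : ∀ e, H.s (eMap e) = collapseV S x vMap (G.s e.1))
    (ht : ∀ e, H.t (eMap e) = collapseV S x vMap (G.t e.1)),
    Function.Injective vMap ∧ x ∉ Set.range vMap ∧
    (∀ w : H.V, w = x ∨ w ∈ Set.range vMap) ∧
    Function.Bijective eMap ∧
    F = Paths.lift (vertexCoarsePrefunctor S x vMap eMap hs ht)

/-- `F` is an elementary morphism: it is induced by a graph isomorphism, a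
vertex addition, an edge addition, an edge subdivision, a coarse-graining of
edges or a coarse-graining of vertices. -/
def IsElementary (G H : DiGraph) (F : G.PathCat ⥤ H.PathCat) : Prop :=
  IsIsoMor G H F ∨ IsAddVertex G H F ∨ IsAddEdge G H F ∨
    IsSubdivision G H F ∨ IsEdgeCoarse G H F ∨ IsVertexCoarse G H F

/-- `CompOf P G H F` : the functor `F` is a finite composite of functors
satisfying `P`, passing only through causal networks (finite acyclic graphs). -/
inductive CompOf (P : ∀ G H : DiGraph, (G.PathCat ⥤ H.PathCat) → Prop) :
    ∀ G H : DiGraph, (G.PathCat ⥤ H.PathCat) → Prop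
  | id (G : DiGraph) : CompOf P G G (Functor.id _)
  | comp {G G' G'' : DiGraph} {F : G.PathCat ⥤ G'.PathCat}
      {F' : G'.PathCat ⥤ G''.PathCat} :
      P G G' F → IsCausalNet G' → CompOf P G' G'' F' → CompOf P G G'' (F ⋙ F')

/-!
Subdividing an edge whose image under `f` is a path of length at least two splits off the first
arrow of that path and lowers the excess `∑ₑ (|f e| - 1)`; iterating, `f` factors through a graph
whose edges go to paths of length at most one. Collapsing a fibre of the vertex map is then a
vertex coarse-graining: the edges inside the fibre go to identities because `φ` is acyclic.
Once the vertex map is injective no edge goes to an identity (the source is acyclic), so the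
remaining functor is induced by a graph map. Merging a fibre of its edge map makes it injective
on edges, and an injective graph map into `φ` becomes an isomorphism after adding the missing
vertices and edges one at a time. Every intermediate graph is acyclic because its edges increase
a lexicographic combination of reachability in `φ` and in the graph it was built from.
-/

open Quiver

namespace Quiver.Path

variable {V : Type*} [Quiver V]

theorem eq_of_length_eq_zero {a b : V} {p q : Path a b} (hp : p.length = 0) (hq : q.length = 0) :
    p = q := by
  obtain rfl := p.eq_of_length_zero hp
  rw [p.eq_nil_of_length_zero hp, q.eq_nil_of_length_zero hq]

theorem exists_eq_toPath_of_length_eq_one {a b : V} (p : Path a b) (h : p.length = 1) :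
    ∃ l : a ⟶ b, p = l.toPath := by
  obtain ⟨c, l, q, hq, rfl⟩ := p.eq_toPath_comp_of_length_eq_succ h
  obtain rfl := q.eq_of_length_zero hq
  rw [q.eq_nil_of_length_zero hq]
  exact ⟨l, rfl⟩

end Quiver.Path

namespace CategoryTheory.Paths

variable {V W : Type*} [Quiver V] [Quiver W]

theorem length_eqToHom {a b : Paths V} (h : a = b) : Path.length (V := V) (eqToHom h) = 0 := by
  subst h; rfl

theorem length_eqToHom_comp_comp_eqToHom {a b c d : Paths V} (h : a = b) (p : b ⟶ c)
    (h' : c = d) :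
    Path.length (V := V) (eqToHom h ≫ p ≫ eqToHom h') = Path.length (V := V) p := by
  subst h h'
  simp

theorem length_map_of_length_eq_zero (F : Paths V ⥤ Paths W) {a b : Paths V} (p : a ⟶ b)
    (hp : Path.length (V := V) p = 0) : Path.length (V := W) (F.map p) = 0 := by
  obtain rfl : a = b := Path.eq_of_length_zero (V := V) p hp
  rw [Path.eq_nil_of_length_zero (V := V) p hp]
  exact F.map_id a ▸ rfl

end CategoryTheory.Paths

theorem Nat.card_lt_of_injective_of_notMem {α β : Type*} [Finite β] (f : α → β)
    (hf : Function.Injective f) {b : β} (hb : b ∉ Set.range f) : Nat.card α < Nat.card β := by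
  have := Fintype.ofFinite β
  have := Fintype.ofInjective f hf
  simpa only [Nat.card_eq_fintype_card] using Fintype.card_lt_of_injective_of_notMem f hf hb

theorem Nat.card_subtype_notMem_sum_unit_lt {α : Type*} [Finite α] {S : Set α} {a b : α}
    (ha : a ∈ S) (hb : b ∈ S) (hab : a ≠ b) : Nat.card ({x // x ∉ S} ⊕ Unit) < Nat.card α := by
  refine Nat.card_lt_of_injective_of_notMem (Sum.elim Subtype.val fun _ => a) ?_ (b := b) ?_
  · rintro (x | ⟨⟩) (y | ⟨⟩) h <;> simp only [Sum.elim_inl, Sum.elim_inr] at h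
    · exact congrArg Sum.inl (Subtype.ext h)
    · exact absurd (h ▸ ha) x.2
    · exact absurd (h ▸ ha) y.2
    · rfl
  · rintro ⟨x | ⟨⟩, h⟩ <;> simp only [Sum.elim_inl, Sum.elim_inr] at h
    · exact x.2 (h ▸ hb)
    · exact hab h

theorem finsum_sum_type {α β M : Type*} [AddCommMonoid M] [Finite α] [Finite β]
    (f : α ⊕ β → M) : ∑ᶠ x, f x = ∑ᶠ a, f (.inl a) + ∑ᶠ b, f (.inr b) := by
  have := Fintype.ofFinite α
  have := Fintype.ofFinite β
  simp only [finsum_eq_sum_of_fintype, Fintype.sum_sum_type]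

theorem finsum_eq_add_finsum_subtype_ne {α M : Type*} [AddCommMonoid M] [Finite α] (f : α → M)
    (a : α) : ∑ᶠ x, f x = f a + ∑ᶠ x : {x // x ≠ a}, f x := by
  classical
  have := Fintype.ofFinite α
  simp only [finsum_eq_sum_of_fintype, Fintype.sum_eq_add_sum_subtype_ne f a]

namespace DiGraph

variable {G : DiGraph} {W : Type*} [Quiver W]

def edge (e : G.E) : (Paths.of G.V).obj (G.s e) ⟶ (Paths.of G.V).obj (G.t e) :=
  (Paths.of G.V).map ⟨e, rfl, rfl⟩

def lift {C : Type*} [Category C] (fo : G.V → C) (fe : ∀ e, fo (G.s e) ⟶ fo (G.t e)) :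
    G.PathCat ⥤ C :=
  Paths.lift
    { obj := fo
      map := fun ε => eqToHom (congrArg fo ε.2.1).symm ≫ fe ε.1 ≫ eqToHom (congrArg fo ε.2.2) }

@[simp]
theorem lift_map_edge {C : Type*} [Category C] (fo : G.V → C)
    (fe : ∀ e, fo (G.s e) ⟶ fo (G.t e)) (e : G.E) : (lift fo fe).map (edge e) = fe e :=
  (Paths.lift_toPath _ _).trans ((Category.id_comp _).trans (Category.comp_id _))

theorem functor_ext {C : Type*} [Category C] {F₁ F₂ : G.PathCat ⥤ C}
    (hobj : ∀ v, F₁.obj v = F₂.obj v) (hmap : ∀ e, F₁.map (edge e) ≍ F₂.map (edge e)) :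
    F₁ = F₂ :=
  Paths.ext_functor (funext hobj) fun _ _ ⟨e, hs, ht⟩ => by
    subst hs ht; exact (conj_eqToHom_iff_heq _ _ _ (hobj _)).2 (hmap e)

def edgeLength (g : G.PathCat ⥤ Paths W) (e : G.E) : ℕ :=
  Path.length (g.map (edge e))

theorem edgeLength_lift (fo : G.V → Paths W) (fe : ∀ e, fo (G.s e) ⟶ fo (G.t e)) (e : G.E) :
    edgeLength (lift fo fe) e = Path.length (fe e) :=
  congrArg Path.length (lift_map_edge fo fe e)

theorem obj_eq_of_edgeLength_eq_zero {g : G.PathCat ⥤ Paths W} {e : G.E}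
    (h : edgeLength g e = 0) : g.obj (G.s e) = g.obj (G.t e) :=
  Path.eq_of_length_zero (V := W) _ h

def Reaches (G : DiGraph) (a b : G.V) : Prop :=
  ∃ p : Path a b, p.length ≠ 0

theorem Reaches.trans {a b c : G.V} : G.Reaches a b → G.Reaches b c → G.Reaches a c := by
  rintro ⟨p, hp⟩ ⟨q, hq⟩
  exact ⟨p.comp q, by rw [Path.length_comp]; omega⟩

theorem reaches_edge (e : G.E) : G.Reaches (G.s e) (G.t e) :=
  ⟨edge e, one_ne_zero⟩

theorem Acyclic.not_reaches (hG : G.Acyclic) (a : G.V) : ¬ G.Reaches a a :=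
  fun ⟨p, hp⟩ => hp (hG a p)

theorem Acyclic.length_eq_zero (hG : G.Acyclic) {a b : G.V} (p : Path a b) (h : a = b) :
    p.length = 0 := by
  subst h; exact hG a p

theorem acyclic_of_transitive (r : G.V → G.V → Prop) (htrans : ∀ {a b c}, r a b → r b c → r a c)
    (hirr : ∀ a, ¬ r a a) (hedge : ∀ e, r (G.s e) (G.t e)) : G.Acyclic := by
  have key : ∀ {a b : G.V} (p : Path a b), p.length ≠ 0 → r a b := by
    intro a b p
    induction p with
    | nil => simp
    | cons q ε ih =>
      obtain ⟨e, rfl, rfl⟩ := ε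
      intro _
      by_cases hq : q.length = 0
      · obtain rfl := q.eq_of_length_zero hq
        exact hedge e
      · exact htrans (ih hq) (hedge e)
  exact fun a p => by_contra fun h => hirr a (key p h)

theorem acyclic_of_lex {α β : Type*} (f : G.V → α) (k : G.V → β) {R : α → α → Prop}
    {Q : β → β → Prop} (hR : ∀ {x y z}, R x y → R y z → R x z) (hR' : ∀ x, ¬ R x x)
    (hQ : ∀ {x y z}, Q x y → Q y z → Q x z) (hQ' : ∀ x, ¬ Q x x)
    (hedge : ∀ e, R (f (G.s e)) (f (G.t e)) ∨
      f (G.s e) = f (G.t e) ∧ Q (k (G.s e)) (k (G.t e))) :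
    G.Acyclic := by
  refine acyclic_of_transitive (fun a b => R (f a) (f b) ∨ f a = f b ∧ Q (k a) (k b))
    ?_ ?_ hedge
  · rintro a b c (h | ⟨h, hq⟩) (h' | ⟨h', hq'⟩)
    · exact .inl (hR h h')
    · exact .inl (h' ▸ h)
    · exact .inl (h ▸ h')
    · exact .inr ⟨h.trans h', hQ hq hq'⟩
  · rintro a (h | ⟨-, h⟩)
    exacts [hR' _ h, hQ' _ h]

end DiGraph

namespace CompOf

variable {P Q : ∀ G H : DiGraph, (G.PathCat ⥤ H.PathCat) → Prop} {G H K : DiGraph}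

theorem single {F : G.PathCat ⥤ H.PathCat} (h : P G H F) (hH : IsCausalNet H) :
    CompOf P G H F := by
  simpa only [Functor.comp_id] using CompOf.comp h hH (CompOf.id H)

theorem trans {F : G.PathCat ⥤ H.PathCat} {F' : H.PathCat ⥤ K.PathCat} (h : CompOf P G H F)
    (h' : CompOf P H K F') : CompOf P G K (F ⋙ F') := by
  induction h with
  | id G => simpa only [Functor.id_comp] using h'
  | comp hP hnet _ ih => simpa only [Functor.assoc] using CompOf.comp hP hnet (ih h')

theorem mono (hPQ : ∀ G H F, P G H F → Q G H F) {F : G.PathCat ⥤ H.PathCat}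
    (h : CompOf P G H F) : CompOf Q G H F := by
  induction h with
  | id G => exact CompOf.id G
  | comp hP hnet _ ih => exact CompOf.comp (hPQ _ _ _ hP) hnet ih

theorem exists_of_descent {C : Type*} [Category C] {I J : ∀ G : DiGraph, (G.PathCat ⥤ C) → Prop}
    (μ : ∀ G : DiGraph, (G.PathCat ⥤ C) → ℕ)
    (step : ∀ (G : DiGraph) (g : G.PathCat ⥤ C), IsCausalNet G → I G g → ¬ J G g →
      ∃ (G' : DiGraph) (F : G.PathCat ⥤ G'.PathCat) (g' : G'.PathCat ⥤ C),
        P G G' F ∧ IsCausalNet G' ∧ I G' g' ∧ μ G' g' < μ G g ∧ g = F ⋙ g')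
    (hG : IsCausalNet G) {g : G.PathCat ⥤ C} (hg : I G g) :
    ∃ (G₁ : DiGraph) (F : G.PathCat ⥤ G₁.PathCat) (g₁ : G₁.PathCat ⥤ C),
      CompOf P G G₁ F ∧ IsCausalNet G₁ ∧ I G₁ g₁ ∧ J G₁ g₁ ∧ g = F ⋙ g₁ := by
  induction hμ : μ G g using Nat.strong_induction_on generalizing G g with
  | _ n ih =>
    by_cases hJ : J G g
    · exact ⟨G, 𝟭 _, g, CompOf.id G, hG, hg, hJ, rfl⟩
    obtain ⟨G', F, g', hP, hG', hg', hlt, rfl⟩ := step G g hG hg hJ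
    obtain ⟨G₁, F', g₁, hF', hG₁, hI₁, hJ₁, rfl⟩ := ih _ (hμ ▸ hlt) hG' hg' rfl
    exact ⟨G₁, F ⋙ F', g₁, CompOf.comp hP hG' hF', hG₁, hI₁, hJ₁, rfl⟩

end CompOf

namespace GraphMap

open DiGraph

variable {G H K : DiGraph}

@[ext]
theorem ext {M N : GraphMap G H} (hv : M.vMap = N.vMap) (he : M.eMap = N.eMap) : M = N := by
  cases M; cases N; subst hv he; rfl

def comp (M : GraphMap G H) (N : GraphMap H K) : GraphMap G K where
  vMap := N.vMap ∘ M.vMap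
  eMap := N.eMap ∘ M.eMap
  hs e := by simp [N.hs, M.hs]
  ht e := by simp [N.ht, M.ht]

theorem functor_comp (M : GraphMap G H) (N : GraphMap H K) :
    (M.comp N).functor = M.functor ⋙ N.functor :=
  functor_ext (fun _ => rfl) fun _ => HEq.rfl

theorem acyclic (M : GraphMap G H) (hH : H.Acyclic) : G.Acyclic :=
  acyclic_of_transitive (fun a b => H.Reaches (M.vMap a) (M.vMap b)) Reaches.trans
    (fun _ => hH.not_reaches _) fun e => M.hs e ▸ M.ht e ▸ reaches_edge (M.eMap e)

end GraphMap

namespace DiGraph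

variable {G φ : DiGraph} {W : Type*} [Quiver W]

/-! ### Subdivision -/

def subdivide (G : DiGraph) (e₀ : G.E) : DiGraph where
  V := G.V ⊕ Unit
  E := {e : G.E // e ≠ e₀} ⊕ Bool
  s
    | .inl e => .inl (G.s e.1)
    | .inr false => .inl (G.s e₀)
    | .inr true => .inr ()
  t
    | .inl e => .inl (G.t e.1)
    | .inr false => .inr ()
    | .inr true => .inl (G.t e₀)

noncomputable def subdivFunctor (G : DiGraph) (e₀ : G.E) :
    G.PathCat ⥤ (G.subdivide e₀).PathCat :=
  Paths.lift (subdivPrefunctor e₀ Sum.inl (Sum.inr ()) Sum.inl (.inr false) (.inr true)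
    (fun _ => rfl) (fun _ => rfl) rfl rfl rfl rfl)

theorem isSubdivision_subdivFunctor (e₀ : G.E) :
    IsSubdivision G (G.subdivide e₀) (G.subdivFunctor e₀) := by
  refine ⟨e₀, Sum.inl, Sum.inr (), Sum.inl, Sum.inr false, Sum.inr true, _, _, _, _, _, _,
    Sum.inl_injective, nofun, ?_, Sum.inl_injective, nofun, nofun, nofun, ?_, rfl⟩
  · rintro (v | ⟨⟩)
    exacts [.inr ⟨v, rfl⟩, .inl rfl]
  · rintro (e | _ | _)
    exacts [.inr (.inr ⟨e, rfl⟩), .inl rfl, .inr (.inl rfl)]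

theorem subdivFunctor_map_edge_self (e₀ : G.E) :
    (G.subdivFunctor e₀).map (edge e₀) =
      edge (G := G.subdivide e₀) (Sum.inr false) ≫ edge (G := G.subdivide e₀) (Sum.inr true) :=
  (Paths.lift_toPath _ _).trans (dif_pos rfl)

theorem subdivFunctor_map_edge_of_ne {e₀ e : G.E} (h : e ≠ e₀) :
    (G.subdivFunctor e₀).map (edge e) = edge (G := G.subdivide e₀) (Sum.inl ⟨e, h⟩) :=
  (Paths.lift_toPath _ _).trans (dif_neg h)

theorem Acyclic.subdivide (hG : G.Acyclic) (e₀ : G.E) : (G.subdivide e₀).Acyclic := by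
  refine acyclic_of_lex (Sum.elim id fun _ => G.s e₀) (Sum.elim (fun _ => 0) fun _ => 1)
    Reaches.trans hG.not_reaches (R := G.Reaches) (Q := (· < ·)) lt_trans lt_irrefl ?_
  rintro (e | _ | _)
  exacts [.inl (reaches_edge e.1), .inr ⟨rfl, zero_lt_one⟩, .inl (reaches_edge e₀)]

theorem IsCausalNet.subdivide (hG : IsCausalNet G) (e₀ : G.E) :
    IsCausalNet (G.subdivide e₀) :=
  have := hG.2.1
  have := hG.2.2
  ⟨hG.1.subdivide e₀, inferInstanceAs (Finite (G.V ⊕ Unit)),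
    inferInstanceAs (Finite ({e // e ≠ e₀} ⊕ Bool))⟩

def splitLift (g : G.PathCat ⥤ Paths W) (e₀ : G.E) {c : W}
    (l : Quiver.Hom (V := W) (g.obj (G.s e₀)) c) (q : Path c (g.obj (G.t e₀))) :
    (G.subdivide e₀).PathCat ⥤ Paths W :=
  lift (G := G.subdivide e₀) (Sum.elim g.obj fun _ => c) fun
    | .inl e => g.map (edge e.1)
    | .inr false => l.toPath
    | .inr true => q

theorem subdivFunctor_comp_splitLift (g : G.PathCat ⥤ Paths W) (e₀ : G.E) {c : W}
    (l : Quiver.Hom (V := W) (g.obj (G.s e₀)) c) (q : Path c (g.obj (G.t e₀)))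
    (hp : g.map (edge e₀) = l.toPath ≫ q) :
    G.subdivFunctor e₀ ⋙ splitLift g e₀ l q = g :=
  functor_ext (fun _ => rfl) fun e => heq_of_eq <| by
    rw [Functor.comp_map]
    by_cases h : e = e₀
    · subst h
      rw [subdivFunctor_map_edge_self, hp]
      exact ((splitLift g e l q).map_comp _ _).trans
        (congrArg₂ (· ≫ ·) (lift_map_edge _ _ _) (lift_map_edge _ _ _))
    · rw [subdivFunctor_map_edge_of_ne h]
      exact lift_map_edge _ _ _

noncomputable def excess (g : G.PathCat ⥤ Paths W) : ℕ :=
  ∑ᶠ e, (edgeLength g e - 1)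

theorem excess_splitLift_lt [Finite G.E] (g : G.PathCat ⥤ Paths W) (e₀ : G.E) {c : W}
    (l : Quiver.Hom (V := W) (g.obj (G.s e₀)) c) (q : Path c (g.obj (G.t e₀)))
    (hp : g.map (edge e₀) = l.toPath ≫ q) (hq : q.length ≠ 0) :
    excess (splitLift g e₀ l q) < excess g := by
  have hlen : edgeLength g e₀ = q.length + 1 := by
    rw [edgeLength, hp]
    exact (Path.length_comp _ _).trans (Nat.add_comm _ _)
  have hkept : ∀ e : {e // e ≠ e₀},
      edgeLength (splitLift g e₀ l q) (Sum.inl e) = edgeLength g e := fun _ =>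
    edgeLength_lift _ _ _
  have hfirst : edgeLength (splitLift g e₀ l q) (Sum.inr false) = 1 := edgeLength_lift _ _ _
  have hsecond : edgeLength (splitLift g e₀ l q) (Sum.inr true) = q.length :=
    edgeLength_lift _ _ _
  calc excess (splitLift g e₀ l q)
      = ∑ᶠ e : {e // e ≠ e₀}, (edgeLength g e - 1) + (q.length - 1) := by
        refine (finsum_sum_type (fun ε : {e // e ≠ e₀} ⊕ Bool =>
          edgeLength (splitLift g e₀ l q) ε - 1)).trans ?_
        simp only [hkept, finsum_eq_sum_of_fintype, Fintype.sum_bool, hfirst, hsecond]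
        omega
    _ < (edgeLength g e₀ - 1) + ∑ᶠ e : {e // e ≠ e₀}, (edgeLength g e - 1) := by omega
    _ = excess g := (finsum_eq_add_finsum_subtype_ne (fun e => edgeLength g e - 1) e₀).symm

theorem exists_subdivide_factor [Finite G.E] (g : G.PathCat ⥤ Paths W) {e₀ : G.E}
    (he₀ : 1 < edgeLength g e₀) :
    ∃ g₁ : (G.subdivide e₀).PathCat ⥤ Paths W,
      excess g₁ < excess g ∧ g = G.subdivFunctor e₀ ⋙ g₁ := by
  obtain ⟨c, l, q, hq, hp⟩ := (g.map (edge e₀)).eq_toPath_comp_of_length_eq_succ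
    (n := edgeLength g e₀ - 1) (by rw [← edgeLength]; omega)
  exact ⟨splitLift g e₀ l q, excess_splitLift_lt g e₀ l q hp (hq.trans_ne (by omega)),
    (subdivFunctor_comp_splitLift g e₀ l q hp).symm⟩

theorem exists_compOf_isSubdivision (hG : IsCausalNet G) (g : G.PathCat ⥤ Paths W) :
    ∃ (G₁ : DiGraph) (F : G.PathCat ⥤ G₁.PathCat) (g₁ : G₁.PathCat ⥤ Paths W),
      CompOf IsSubdivision G G₁ F ∧ IsCausalNet G₁ ∧ (∀ e, edgeLength g₁ e ≤ 1) ∧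
        g = F ⋙ g₁ := by
  obtain ⟨G₁, F, g₁, hF, hG₁, -, hlen, hfac⟩ := CompOf.exists_of_descent (I := fun _ _ => True)
    (J := fun _ g₁ => ∀ e, edgeLength (W := W) g₁ e ≤ 1) (fun _ g => excess g)
    (fun G g hG _ hlong => by
      obtain ⟨e₀, he₀⟩ := not_forall.1 hlong
      have := hG.2.2
      obtain ⟨g₁, hlt, hfac⟩ := exists_subdivide_factor g (not_le.1 he₀)
      exact ⟨_, _, g₁, isSubdivision_subdivFunctor e₀, IsCausalNet.subdivide hG e₀, trivial,
        hlt, hfac⟩)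
    hG trivial
  exact ⟨G₁, F, g₁, hF, hG₁, hlen, hfac⟩

/-! ### Collapsing a fibre of the vertex map -/

open Classical in
noncomputable def collapseVertex (S : Set G.V) (v : G.V) : {v // v ∉ S} ⊕ Unit :=
  if h : v ∈ S then .inr () else .inl ⟨v, h⟩

noncomputable def collapse (G : DiGraph) (S : Set G.V) : DiGraph where
  V := {v // v ∉ S} ⊕ Unit
  E := {e // ¬(G.s e ∈ S ∧ G.t e ∈ S)}
  s ε := collapseVertex S (G.s ε.1)
  t ε := collapseVertex S (G.t ε.1)

noncomputable def collapseFunctor (G : DiGraph) (S : Set G.V) :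
    G.PathCat ⥤ (G.collapse S).PathCat :=
  Paths.lift (vertexCoarsePrefunctor (H := G.collapse S) S (Sum.inr ()) Sum.inl id
    (fun _ => rfl) (fun _ => rfl))

theorem isVertexCoarse_collapseFunctor (S : Set G.V) :
    IsVertexCoarse G (G.collapse S) (G.collapseFunctor S) := by
  refine ⟨S, Sum.inr (), Sum.inl, id, _, _, Sum.inl_injective, nofun, ?_,
    Function.bijective_id, rfl⟩
  rintro (v | ⟨⟩)
  exacts [.inr ⟨v, rfl⟩, .inl rfl]

theorem collapseFunctor_map_edge {S : Set G.V} {e : G.E} (h : ¬(G.s e ∈ S ∧ G.t e ∈ S)) :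
    (G.collapseFunctor S).map (edge e) = edge (G := G.collapse S) ⟨e, h⟩ :=
  (Paths.lift_toPath _ _).trans (dif_neg h)

theorem edgeLength_collapseFunctor {S : Set G.V} {e : G.E} (hs : G.s e ∈ S) (ht : G.t e ∈ S) :
    edgeLength (G.collapseFunctor S) e = 0 :=
  (congrArg Path.length ((Paths.lift_toPath _ _).trans (dif_pos ⟨hs, ht⟩))).trans
    (Paths.length_eqToHom _)

def collapseSection (S : Set G.V) (u : G.V) : (G.collapse S).V → G.V :=
  Sum.elim Subtype.val fun _ => u

theorem collapseSection_collapseVertex {S : Set G.V} (u : G.V) {v : G.V} (hv : v ∉ S) :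
    collapseSection S u (collapseVertex S v) = v := by
  simp [collapseVertex, hv, collapseSection]

theorem obj_collapseSection_collapseVertex {C : Type*} [Category C] (g : G.PathCat ⥤ C)
    {S : Set G.V} {u : G.V} (hS : ∀ v ∈ S, g.obj v = g.obj u) (v : G.V) :
    g.obj (collapseSection S u (collapseVertex S v)) = g.obj v := by
  by_cases hv : v ∈ S
  · simp [collapseVertex, hv, collapseSection, hS v hv]
  · rw [collapseSection_collapseVertex u hv]

noncomputable def collapseLift {C : Type*} [Category C] (g : G.PathCat ⥤ C) (S : Set G.V)
    (u : G.V) (hS : ∀ v ∈ S, g.obj v = g.obj u) : (G.collapse S).PathCat ⥤ C :=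
  lift (fun w => g.obj (collapseSection S u w)) fun ε =>
    eqToHom (obj_collapseSection_collapseVertex g hS _) ≫ g.map (edge ε.1) ≫
      eqToHom (obj_collapseSection_collapseVertex g hS _).symm

theorem edgeLength_collapseLift (g : G.PathCat ⥤ Paths W) {S : Set G.V} {u : G.V}
    (hS : ∀ v ∈ S, g.obj v = g.obj u) (ε : (G.collapse S).E) :
    edgeLength (collapseLift g S u hS) ε = edgeLength g ε.1 :=
  (edgeLength_lift _ _ _).trans (Paths.length_eqToHom_comp_comp_eqToHom _ _ _)

theorem collapseFunctor_comp_collapseLift (g : G.PathCat ⥤ Paths W) {S : Set G.V} {u : G.V}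
    (hS : ∀ v ∈ S, g.obj v = g.obj u)
    (hS₀ : ∀ e, G.s e ∈ S → G.t e ∈ S → edgeLength g e = 0) :
    G.collapseFunctor S ⋙ collapseLift g S u hS = g := by
  refine functor_ext (obj_collapseSection_collapseVertex g hS) fun e => ?_
  rw [Functor.comp_map]
  by_cases h : G.s e ∈ S ∧ G.t e ∈ S
  · refine (conj_eqToHom_iff_heq _ _ (obj_collapseSection_collapseVertex g hS _)
      (obj_collapseSection_collapseVertex g hS _)).1 (Path.eq_of_length_eq_zero ?_ ?_)
    · exact Paths.length_map_of_length_eq_zero _ _ (edgeLength_collapseFunctor h.1 h.2)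
    · exact (Paths.length_eqToHom_comp_comp_eqToHom _ _ _).trans (hS₀ e h.1 h.2)
  · rw [collapseFunctor_map_edge h]
    exact (heq_of_eq (lift_map_edge _ _ _)).trans
      ((eqToHom_comp_heq _ _).trans (comp_eqToHom_heq _ _))

-- An edge of the collapsed graph either goes up in `φ`, or its image is an identity; then, the
-- collapsed set being a whole fibre, both of its endpoints lie outside it.
theorem Acyclic.collapse (hG : G.Acyclic) (hφ : φ.Acyclic) (g : G.PathCat ⥤ φ.PathCat)
    (u : G.V) : (G.collapse {v | g.obj v = g.obj u}).Acyclic := by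
  set S : Set G.V := {v | g.obj v = g.obj u}
  have hS : ∀ v ∈ S, g.obj v = g.obj u := fun _ h => h
  refine acyclic_of_lex (R := φ.Reaches) (Q := G.Reaches) (fun w => g.obj (collapseSection S u w))
    (collapseSection S u) Reaches.trans hφ.not_reaches Reaches.trans hG.not_reaches ?_
  rintro ⟨e, he⟩
  show φ.Reaches (g.obj (collapseSection S u (collapseVertex S (G.s e))))
      (g.obj (collapseSection S u (collapseVertex S (G.t e)))) ∨
    g.obj (collapseSection S u (collapseVertex S (G.s e))) =
        g.obj (collapseSection S u (collapseVertex S (G.t e))) ∧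
      G.Reaches (collapseSection S u (collapseVertex S (G.s e)))
        (collapseSection S u (collapseVertex S (G.t e)))
  rw [obj_collapseSection_collapseVertex g hS, obj_collapseSection_collapseVertex g hS]
  by_cases h0 : edgeLength g e = 0
  · have heq := obj_eq_of_edgeLength_eq_zero h0
    have hs : G.s e ∉ S := fun hs => he ⟨hs, heq.symm.trans hs⟩
    have ht : G.t e ∉ S := fun ht => he ⟨heq.trans ht, ht⟩
    rw [collapseSection_collapseVertex u hs, collapseSection_collapseVertex u ht]
    exact .inr ⟨heq, reaches_edge e⟩
  · exact .inl ⟨g.map (edge e), h0⟩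

theorem IsCausalNet.collapse (hG : IsCausalNet G) (hφ : φ.Acyclic) (g : G.PathCat ⥤ φ.PathCat)
    (u : G.V) : IsCausalNet (G.collapse {v | g.obj v = g.obj u}) :=
  have := hG.2.1
  have := hG.2.2
  ⟨hG.1.collapse hφ g u, inferInstanceAs (Finite (_ ⊕ Unit)), Subtype.finite⟩

theorem exists_collapse_factor (hφ : φ.Acyclic) (g : G.PathCat ⥤ φ.PathCat) (u : G.V) :
    ∃ g₂ : (G.collapse {v | g.obj v = g.obj u}).PathCat ⥤ φ.PathCat,
      (∀ ε, edgeLength g₂ ε = edgeLength g ε.1) ∧ g = G.collapseFunctor _ ⋙ g₂ :=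
  ⟨collapseLift g _ u fun _ h => h, edgeLength_collapseLift g _,
    (collapseFunctor_comp_collapseLift g _ fun _ hs ht =>
      hφ.length_eq_zero _ (hs.trans ht.symm)).symm⟩

theorem exists_compOf_isVertexCoarse (hφ : φ.Acyclic) (hG : IsCausalNet G)
    (g : G.PathCat ⥤ φ.PathCat) (hlen : ∀ e, edgeLength g e ≤ 1) :
    ∃ (G₂ : DiGraph) (F : G.PathCat ⥤ G₂.PathCat) (g₂ : G₂.PathCat ⥤ φ.PathCat),
      CompOf IsVertexCoarse G G₂ F ∧ IsCausalNet G₂ ∧ (∀ e, edgeLength g₂ e ≤ 1) ∧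
        Function.Injective g₂.obj ∧ g = F ⋙ g₂ :=
  CompOf.exists_of_descent (I := fun _ g => ∀ e, edgeLength (W := φ.V) g e ≤ 1)
    (J := fun _ g => Function.Injective g.obj) (fun G _ => Nat.card G.V)
    (fun G g hG hlen hninj => by
      obtain ⟨u, v, huv, hne⟩ : ∃ u v, g.obj u = g.obj v ∧ u ≠ v := by
        simpa [Function.Injective] using hninj
      obtain ⟨g₂, hlen₂, hfac⟩ := exists_collapse_factor hφ g u
      have := hG.2.1
      exact ⟨_, _, g₂, isVertexCoarse_collapseFunctor _, IsCausalNet.collapse hG hφ g u,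
        fun ε => (hlen₂ ε).trans_le (hlen ε.1),
        Nat.card_subtype_notMem_sum_unit_lt rfl huv.symm hne, hfac⟩)
    hG hlen

/-! ### Graph maps and merging parallel edges -/

theorem Acyclic.edgeLength_ne_zero (hG : G.Acyclic) {g : G.PathCat ⥤ Paths W}
    (hinj : Function.Injective g.obj) (e : G.E) : edgeLength g e ≠ 0 := fun h =>
  hG.not_reaches _ ((hinj (obj_eq_of_edgeLength_eq_zero h)) ▸ reaches_edge e)

theorem exists_graphMap_of_edgeLength_eq_one {g : G.PathCat ⥤ φ.PathCat}
    (h : ∀ e, edgeLength g e = 1) : ∃ M : GraphMap G φ, g = M.functor := by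
  choose l hl using fun e => Path.exists_eq_toPath_of_length_eq_one (V := φ.V) _ (h e)
  exact ⟨⟨g.obj, fun e => (l e).1, fun e => (l e).2.1, fun e => (l e).2.2⟩,
    functor_ext (fun _ => rfl) fun e => heq_of_eq (hl e)⟩

theorem exists_graphMap_of_injective (hG : G.Acyclic) {g : G.PathCat ⥤ φ.PathCat}
    (hlen : ∀ e, edgeLength g e ≤ 1) (hinj : Function.Injective g.obj) :
    ∃ M : GraphMap G φ, Function.Injective M.vMap ∧ g = M.functor := by
  obtain ⟨M, rfl⟩ := exists_graphMap_of_edgeLength_eq_one fun e =>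
    (hlen e).antisymm (Nat.one_le_iff_ne_zero.2 (hG.edgeLength_ne_zero hinj e))
  exact ⟨M, hinj, rfl⟩

def mergeEdges (G : DiGraph) (Sm : Set G.E) (a b : G.V) : DiGraph where
  V := G.V
  E := {e // e ∉ Sm} ⊕ Unit
  s := Sum.elim (fun e => G.s e.1) fun _ => a
  t := Sum.elim (fun e => G.t e.1) fun _ => b

open Classical in
noncomputable def mergeEdge (Sm : Set G.E) (e : G.E) : {e // e ∉ Sm} ⊕ Unit :=
  if h : e ∈ Sm then .inr () else .inl ⟨e, h⟩

noncomputable def mergeMap {Sm : Set G.E} {a b : G.V}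
    (hcom : ∀ e ∈ Sm, G.s e = a ∧ G.t e = b) : GraphMap G (G.mergeEdges Sm a b) where
  vMap := id
  eMap := mergeEdge Sm
  hs e := show Sum.elim _ _ (mergeEdge Sm e) = G.s e by
    by_cases h : e ∈ Sm <;> simp [mergeEdge, h, hcom]
  ht e := show Sum.elim _ _ (mergeEdge Sm e) = G.t e by
    by_cases h : e ∈ Sm <;> simp [mergeEdge, h, hcom]

theorem isEdgeCoarse_mergeMap {Sm : Set G.E} {a b : G.V}
    (hcom : ∀ e ∈ Sm, G.s e = a ∧ G.t e = b) (hSm : Sm.Nonempty) :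
    IsEdgeCoarse G (G.mergeEdges Sm a b) (mergeMap hcom).functor := by
  refine ⟨Sm, id, Sum.inl, Sum.inr (), a, b, hcom, fun _ => rfl, fun _ => rfl, rfl, rfl, hSm,
    Function.bijective_id, Sum.inl_injective, nofun, ?_, ?_⟩
  · rintro (e | ⟨⟩)
    exacts [.inr ⟨e, rfl⟩, .inl rfl]
  · refine congrArg Paths.lift (Prefunctor.ext (fun _ => rfl) fun _ _ ⟨e, _, _⟩ => ?_)
    dsimp only [edgeCoarsePrefunctor]
    by_cases h : e ∈ Sm
    · rw [dif_pos h]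
      exact congrArg (Paths.of _).map (Subtype.ext (dif_pos h))
    · rw [dif_neg h]
      exact congrArg (Paths.of _).map (Subtype.ext (dif_neg h))

end DiGraph

namespace GraphMap

open DiGraph

variable {G φ : DiGraph}

def mergeLift (M : GraphMap G φ) (Sm : Set G.E) (e₁ : G.E) :
    GraphMap (G.mergeEdges Sm (G.s e₁) (G.t e₁)) φ where
  vMap := M.vMap
  eMap := Sum.elim (fun e => M.eMap e.1) fun _ => M.eMap e₁
  hs := by
    rintro (e | _)
    exacts [M.hs e.1, M.hs e₁]
  ht := by
    rintro (e | _)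
    exacts [M.ht e.1, M.ht e₁]

theorem mergeMap_comp_mergeLift (M : GraphMap G φ) {e₁ : G.E}
    (hcom : ∀ e ∈ {e | M.eMap e = M.eMap e₁}, G.s e = G.s e₁ ∧ G.t e = G.t e₁) :
    (mergeMap hcom).comp (M.mergeLift _ e₁) = M := by
  refine GraphMap.ext rfl (funext fun e => ?_)
  show Sum.elim _ _ (mergeEdge _ e) = M.eMap e
  by_cases h : M.eMap e = M.eMap e₁ <;> simp [mergeEdge, h]

theorem exists_mergeEdges_factor (hφ : φ.Acyclic) (hG : IsCausalNet G) (M : GraphMap G φ)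
    (hv : Function.Injective M.vMap) {e₁ e₂ : G.E} (h : M.eMap e₁ = M.eMap e₂) (hne : e₁ ≠ e₂) :
    ∃ (G' : DiGraph) (N : GraphMap G G') (M' : GraphMap G' φ), IsEdgeCoarse G G' N.functor ∧
      IsCausalNet G' ∧ Function.Injective M'.vMap ∧ Nat.card G'.E < Nat.card G.E ∧
        M = N.comp M' := by
  have hcom : ∀ e ∈ {e | M.eMap e = M.eMap e₁}, G.s e = G.s e₁ ∧ G.t e = G.t e₁ :=
    fun e he => ⟨hv (by rw [← M.hs, ← M.hs, he.out]), hv (by rw [← M.ht, ← M.ht, he.out])⟩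
  have := hG.2.1
  have := hG.2.2
  refine ⟨_, mergeMap hcom, M.mergeLift _ e₁, isEdgeCoarse_mergeMap hcom ⟨e₁, rfl⟩,
    ⟨(M.mergeLift _ e₁).acyclic hφ, inferInstanceAs (Finite G.V),
      inferInstanceAs (Finite (_ ⊕ Unit))⟩, hv,
    Nat.card_subtype_notMem_sum_unit_lt rfl h.symm hne, (M.mergeMap_comp_mergeLift hcom).symm⟩

theorem exists_compOf_isEdgeCoarse (hφ : φ.Acyclic) (hG : IsCausalNet G) (M : GraphMap G φ)
    (hv : Function.Injective M.vMap) :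
    ∃ (G₃ : DiGraph) (F : G.PathCat ⥤ G₃.PathCat) (M₃ : GraphMap G₃ φ),
      CompOf IsEdgeCoarse G G₃ F ∧ IsCausalNet G₃ ∧ Function.Injective M₃.vMap ∧
        Function.Injective M₃.eMap ∧ M.functor = F ⋙ M₃.functor := by
  obtain ⟨G₃, F, _, hF, hG₃, -, ⟨M₃, rfl, hv₃, he₃⟩, hfac⟩ := CompOf.exists_of_descent
    (I := fun G g => ∃ M : GraphMap G φ, g = M.functor ∧ Function.Injective M.vMap)
    (J := fun G g => ∃ M : GraphMap G φ, g = M.functor ∧ Function.Injective M.vMap ∧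
      Function.Injective M.eMap)
    (fun G _ => Nat.card G.E)
    (fun G g hG ⟨M, hM, hv⟩ hJ => by
      obtain ⟨e₁, e₂, h, hne⟩ : ∃ e₁ e₂, M.eMap e₁ = M.eMap e₂ ∧ e₁ ≠ e₂ := by
        by_contra! he
        exact hJ ⟨M, hM, hv, fun e₁ e₂ h => he e₁ e₂ h⟩
      obtain ⟨G', N, M', hN, hG', hv', hcard, rfl⟩ := M.exists_mergeEdges_factor hφ hG hv h hne
      exact ⟨G', N.functor, M'.functor, hN, hG', ⟨M', rfl, hv'⟩, hcard,
        hM.trans (N.functor_comp M')⟩)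
    hG ⟨M, rfl, hv⟩
  exact ⟨G₃, F, M₃, hF, hG₃, hv₃, he₃, hfac⟩

end GraphMap

/-! ### Adding vertices and edges -/

namespace DiGraph

variable {G φ : DiGraph}

def addVertex (G : DiGraph) : DiGraph where
  V := G.V ⊕ Unit
  E := G.E
  s e := .inl (G.s e)
  t e := .inl (G.t e)

def addVertexMap (G : DiGraph) : GraphMap G G.addVertex :=
  ⟨Sum.inl, id, fun _ => rfl, fun _ => rfl⟩

theorem isAddVertex_addVertexMap : IsAddVertex G G.addVertex G.addVertexMap.functor := by
  refine ⟨_, Sum.inl_injective, Function.bijective_id, ⟨Sum.inr (), by rintro ⟨_, ⟨⟩⟩, ?_⟩, rfl⟩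
  rintro (v | ⟨⟩)
  exacts [.inr ⟨v, rfl⟩, .inl rfl]

def addEdge (G : DiGraph) (a b : G.V) : DiGraph where
  V := G.V
  E := G.E ⊕ Unit
  s := Sum.elim G.s fun _ => a
  t := Sum.elim G.t fun _ => b

def addEdgeMap (G : DiGraph) (a b : G.V) : GraphMap G (G.addEdge a b) :=
  ⟨id, Sum.inl, fun _ => rfl, fun _ => rfl⟩

theorem isAddEdge_addEdgeMap (a b : G.V) :
    IsAddEdge G (G.addEdge a b) (G.addEdgeMap a b).functor := by
  refine ⟨_, Function.bijective_id, Sum.inl_injective, ⟨Sum.inr (), by rintro ⟨_, ⟨⟩⟩, ?_⟩, rfl⟩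
  rintro (e | ⟨⟩)
  exacts [.inr ⟨e, rfl⟩, .inl rfl]

noncomputable def deficit (φ G : DiGraph) : ℕ :=
  (Nat.card φ.V - Nat.card G.V) + (Nat.card φ.E - Nat.card G.E)

end DiGraph

namespace GraphMap

open DiGraph

variable {G φ : DiGraph}

def extendVertex (M : GraphMap G φ) (v₀ : φ.V) : GraphMap G.addVertex φ :=
  ⟨Sum.elim M.vMap fun _ => v₀, M.eMap, M.hs, M.ht⟩

def extendEdge (M : GraphMap G φ) {a b : G.V} (l₀ : φ.E) (ha : φ.s l₀ = M.vMap a)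
    (hb : φ.t l₀ = M.vMap b) : GraphMap (G.addEdge a b) φ where
  vMap := M.vMap
  eMap := Sum.elim M.eMap fun _ => l₀
  hs := by
    rintro (e | _)
    exacts [M.hs e, ha]
  ht := by
    rintro (e | _)
    exacts [M.ht e, hb]

theorem exists_addVertex_factor (hφ : IsCausalNet φ) (hG : IsCausalNet G) (M : GraphMap G φ)
    (hv : Function.Injective M.vMap) (he : Function.Injective M.eMap) {v₀ : φ.V}
    (hv₀ : v₀ ∉ Set.range M.vMap) :
    IsCausalNet G.addVertex ∧ Function.Injective (M.extendVertex v₀).vMap ∧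
      Function.Injective (M.extendVertex v₀).eMap ∧ deficit φ G.addVertex < deficit φ G ∧
        M = G.addVertexMap.comp (M.extendVertex v₀) := by
  have := hG.2.1
  have := hφ.2.1
  refine ⟨⟨(M.extendVertex v₀).acyclic hφ.1, inferInstanceAs (Finite (_ ⊕ Unit)), hG.2.2⟩,
    hv.sumElim (fun _ _ _ => rfl) fun v _ h => hv₀ ⟨v, h⟩, he, ?_, rfl⟩
  have hlt := Nat.card_lt_of_injective_of_notMem _ hv hv₀
  have hcardV : Nat.card G.addVertex.V = Nat.card G.V + 1 :=
    (Nat.card_sum (α := G.V) (β := Unit)).trans (congrArg _ Nat.card_unique)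
  have hcardE : Nat.card G.addVertex.E = Nat.card G.E := rfl
  unfold deficit
  omega

theorem exists_addEdge_factor (hφ : IsCausalNet φ) (hG : IsCausalNet G) (M : GraphMap G φ)
    (hv : Function.Injective M.vMap) (he : Function.Injective M.eMap) {a b : G.V} {l₀ : φ.E}
    (hl₀ : l₀ ∉ Set.range M.eMap) (ha : φ.s l₀ = M.vMap a) (hb : φ.t l₀ = M.vMap b) :
    IsCausalNet (G.addEdge a b) ∧ Function.Injective (M.extendEdge l₀ ha hb).vMap ∧
      Function.Injective (M.extendEdge l₀ ha hb).eMap ∧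
        deficit φ (G.addEdge a b) < deficit φ G ∧
          M = (G.addEdgeMap a b).comp (M.extendEdge l₀ ha hb) := by
  have := hG.2.2
  have := hφ.2.2
  refine ⟨⟨(M.extendEdge l₀ ha hb).acyclic hφ.1, hG.2.1, inferInstanceAs (Finite (_ ⊕ Unit))⟩,
    hv, he.sumElim (fun _ _ _ => rfl) fun e _ h => hl₀ ⟨e, h⟩, ?_, rfl⟩
  have hlt := Nat.card_lt_of_injective_of_notMem _ he hl₀
  have hcardE : Nat.card (G.addEdge a b).E = Nat.card G.E + 1 :=
    (Nat.card_sum (α := G.E) (β := Unit)).trans (congrArg _ Nat.card_unique)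
  have hcardV : Nat.card (G.addEdge a b).V = Nat.card G.V := rfl
  unfold deficit
  omega

theorem exists_addition_factor (hφ : IsCausalNet φ) (hG : IsCausalNet G) (M : GraphMap G φ)
    (hv : Function.Injective M.vMap) (he : Function.Injective M.eMap)
    (hM : ¬(Function.Surjective M.vMap ∧ Function.Surjective M.eMap)) :
    ∃ (G' : DiGraph) (N : GraphMap G G') (M' : GraphMap G' φ),
      (IsAddVertex G G' N.functor ∨ IsAddEdge G G' N.functor) ∧ IsCausalNet G' ∧
        Function.Injective M'.vMap ∧ Function.Injective M'.eMap ∧ deficit φ G' < deficit φ G ∧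
          M = N.comp M' := by
  by_cases hsv : Function.Surjective M.vMap
  · obtain ⟨l₀, hl₀⟩ : ∃ l₀, l₀ ∉ Set.range M.eMap := by
      simpa [Function.Surjective] using fun hse => hM ⟨hsv, hse⟩
    obtain ⟨a, ha⟩ := hsv (φ.s l₀)
    obtain ⟨b, hb⟩ := hsv (φ.t l₀)
    exact ⟨_, _, _, .inr (isAddEdge_addEdgeMap a b),
      M.exists_addEdge_factor hφ hG hv he hl₀ ha.symm hb.symm⟩
  · obtain ⟨v₀, hv₀⟩ : ∃ v₀, v₀ ∉ Set.range M.vMap := by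
      simpa [Function.Surjective] using hsv
    exact ⟨_, _, _, .inl isAddVertex_addVertexMap, M.exists_addVertex_factor hφ hG hv he hv₀⟩

theorem compOf_functor_of_injective (hφ : IsCausalNet φ) (hG : IsCausalNet G)
    (M : GraphMap G φ) (hv : Function.Injective M.vMap) (he : Function.Injective M.eMap) :
    CompOf (fun G H F => IsIsoMor G H F ∨ IsAddVertex G H F ∨ IsAddEdge G H F ∨
      IsSubdivision G H F) G φ M.functor := by
  obtain ⟨G₄, F, g₄, hF, -, -, hiso, hfac⟩ := CompOf.exists_of_descent
    (P := fun G H F => IsAddVertex G H F ∨ IsAddEdge G H F)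
    (I := fun G g => ∃ M : GraphMap G φ, g = M.functor ∧ Function.Injective M.vMap ∧
      Function.Injective M.eMap)
    (J := fun G g => IsIsoMor G φ g) (fun G _ => deficit φ G)
    (fun G g hG ⟨M, hM, hv, he⟩ hJ => by
      obtain ⟨G', N, M', hN, hG', hv', he', hlt, rfl⟩ := M.exists_addition_factor hφ hG hv he
        fun ⟨hsv, hse⟩ => hJ ⟨M, ⟨hv, hsv⟩, ⟨he, hse⟩, hM⟩
      exact ⟨G', N.functor, M'.functor, hN, hG', ⟨M', rfl, hv', he'⟩, hlt,
        hM.trans (N.functor_comp M')⟩)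
    hG ⟨M, rfl, hv, he⟩
  rw [hfac]
  exact (hF.mono fun _ _ _ h => by tauto).trans (CompOf.single (.inl hiso) hφ)

end GraphMap

/--
Any functor `f : F(ψ) ⥤ F(φ)` between the path categories of
finite acyclic directed graphs decomposes as a finite composite of elementary
morphisms; more precisely `f` factors as
`F(ψ) ⟶ F(ψ₁) ⟶ F(ψ₂) ⟶ F(ψ₃) ⟶ F(φ)` where the first arrow is a composite of
edge subdivisions, the second a composite of coarse-grainings of vertices, the
third a composite of coarse-grainings of edges, and the last a composite of
isomorphisms, vertex additions, edge additions and edge subdivisions.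
-/
theorem elementary_decomposition (ψ φ : DiGraph)
    (hψ : IsCausalNet ψ) (hφ : IsCausalNet φ) (f : ψ.PathCat ⥤ φ.PathCat) :
    CompOf IsElementary ψ φ f ∧
    ∃ (ψ₁ ψ₂ ψ₃ : DiGraph), IsCausalNet ψ₁ ∧ IsCausalNet ψ₂ ∧ IsCausalNet ψ₃ ∧
      ∃ (F₁ : ψ.PathCat ⥤ ψ₁.PathCat) (F₂ : ψ₁.PathCat ⥤ ψ₂.PathCat)
        (F₃ : ψ₂.PathCat ⥤ ψ₃.PathCat) (F₄ : ψ₃.PathCat ⥤ φ.PathCat),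
        CompOf IsSubdivision ψ ψ₁ F₁ ∧
        CompOf IsVertexCoarse ψ₁ ψ₂ F₂ ∧
        CompOf IsEdgeCoarse ψ₂ ψ₃ F₃ ∧
        CompOf (fun G H F =>
          IsIsoMor G H F ∨ IsAddVertex G H F ∨ IsAddEdge G H F ∨
            IsSubdivision G H F) ψ₃ φ F₄ ∧
        f = F₁ ⋙ F₂ ⋙ F₃ ⋙ F₄ := by
  obtain ⟨ψ₁, F₁, g₁, hF₁, hψ₁, hlen₁, rfl⟩ := DiGraph.exists_compOf_isSubdivision hψ f
  obtain ⟨ψ₂, F₂, g₂, hF₂, hψ₂, hlen₂, hinj₂, rfl⟩ :=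
    DiGraph.exists_compOf_isVertexCoarse hφ.1 hψ₁ g₁ hlen₁
  obtain ⟨M, hv, rfl⟩ := DiGraph.exists_graphMap_of_injective hψ₂.1 hlen₂ hinj₂
  obtain ⟨ψ₃, F₃, M₃, hF₃, hψ₃, hv₃, he₃, hfac₃⟩ := M.exists_compOf_isEdgeCoarse hφ.1 hψ₂ hv
  have hF₄ := M₃.compOf_functor_of_injective hφ hψ₃ hv₃ he₃
  rw [hfac₃]
  refine ⟨?_, ψ₁, ψ₂, ψ₃, hψ₁, hψ₂, hψ₃, F₁, F₂, F₃, M₃.functor, hF₁, hF₂, hF₃, hF₄, rfl⟩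
  exact (hF₁.mono fun _ _ _ h => by unfold IsElementary; tauto).trans
    ((hF₂.mono fun _ _ _ h => by unfold IsElementary; tauto).trans
      ((hF₃.mono fun _ _ _ h => by unfold IsElementary; tauto).trans
        (hF₄.mono fun _ _ _ h => by unfold IsElementary; tauto)))
end
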